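/- Assume C ⊆ H^T is invariant under componentwise positive scalings (if (w₁,…,w_T) ∈ C and c₁,…,c_T > 0 then (c₁w₁,…,c_Tw_T) ∈ C) and that F_𝟙 = {w ∈ C : ∑_t ‖w_t‖² ≤ R} is nonempty. Then for every λ ≻ 0, the empirical Rademacher complexity satisfies R(F_λ) ≤ (2/(TN)) · √(∑_{t=1}^T 1/λ_t) · E_σ[ √( sup_{w ∈ F_𝟙} ∑_{t=1}^T ( ∑_{i=1}^N σ_t^i ⟨w_t, φ_{t,i}⟩ )² ) ]. -/

import Mathlib

/-- The real sign `±1` associated with a Boolean Rademacher variable. -/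
noncomputable def sgn (b : Bool) : ℝ := if b then 1 else -1

/-- The hypothesis class `F_λ = {w ∈ C : ∑_t λ_t ‖w_t‖² ≤ R}`. -/
def hypClass {H : Type*} [NormedAddCommGroup H] [InnerProductSpace ℝ H]
    {T : ℕ} (C : Set (Fin T → H)) (R : ℝ) (lam : Fin T → ℝ) : Set (Fin T → H) :=
  {w | w ∈ C ∧ ∑ t, lam t * ‖w t‖ ^ 2 ≤ R}

/-- Empirical Rademacher complexity
`R(F) = (2/(TN)) E_σ[sup_{w ∈ F} ∑_t ∑_i σ_t^i ⟨w_t, φ_{t,i}⟩]`,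
the expectation being the average over all sign patterns `σ ∈ {±1}^{T×N}`. -/
noncomputable def radComplexity {H : Type*} [NormedAddCommGroup H] [InnerProductSpace ℝ H]
    {T N : ℕ} (φ : Fin T → Fin N → H) (F : Set (Fin T → H)) : ℝ :=
  (2 / (T * N)) * ((1 / 2 ^ (T * N)) *
    ∑ σ : Fin T → Fin N → Bool,
      sSup ((fun w : Fin T → H => ∑ t, ∑ i, sgn (σ t i) * (inner ℝ (w t) (φ t i) : ℝ)) '' F))

/-- Theorem: upper bound on the Rademacher complexity of `F_λ`:
if `C` is invariant under componentwise positive scalings and `F_𝟙` is nonempty,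
then for every `λ ≻ 0`,
`R(F_λ) ≤ (2/(TN)) √(∑_t 1/λ_t) ·
  E_σ[ √( sup_{w ∈ F_𝟙} ∑_t (∑_i σ_t^i ⟨w_t, φ_{t,i}⟩)² ) ]`. -/
theorem radComplexity_upper_bound {H : Type*} [NormedAddCommGroup H] [InnerProductSpace ℝ H]
    {T N : ℕ} (hT : 0 < T) (hN : 0 < N) (φ : Fin T → Fin N → H)
    (C : Set (Fin T → H))
    (hC : ∀ w ∈ C, ∀ c : Fin T → ℝ, (∀ t, 0 < c t) → (fun t => c t • w t) ∈ C)
    (R : ℝ) (hR : 0 < R)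
    (hne : (hypClass C R (fun _ => 1)).Nonempty)
    (lam : Fin T → ℝ) (hlam : ∀ t, 0 < lam t) :
    radComplexity φ (hypClass C R lam) ≤
      (2 / (T * N)) * Real.sqrt (∑ t, 1 / lam t) *
        ((1 / 2 ^ (T * N)) * ∑ σ : Fin T → Fin N → Bool,
          Real.sqrt (sSup ((fun w : Fin T → H =>
            ∑ t, (∑ i, sgn (σ t i) * (inner ℝ (w t) (φ t i) : ℝ)) ^ 2) ''
              hypClass C R (fun _ => 1)))) := by
  classical
  set L : ℝ := ∑ t, 1 / lam t with hL
  have hL0 : 0 ≤ L := Finset.sum_nonneg fun t _ => div_nonneg zero_le_one (hlam t).le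
  -- the per-σ supremum bound
  have key : ∀ σ : Fin T → Fin N → Bool,
      sSup ((fun w : Fin T → H =>
          ∑ t, ∑ i, sgn (σ t i) * (inner ℝ (w t) (φ t i) : ℝ)) '' hypClass C R lam) ≤
        Real.sqrt L * Real.sqrt (sSup ((fun w : Fin T → H =>
          ∑ t, (∑ i, sgn (σ t i) * (inner ℝ (w t) (φ t i) : ℝ)) ^ 2) ''
            hypClass C R (fun _ => 1))) := by
    intro σ
    set Q : Set ℝ := (fun w : Fin T → H =>
        ∑ t, (∑ i, sgn (σ t i) * (inner ℝ (w t) (φ t i) : ℝ)) ^ 2) '' hypClass C R (fun _ => 1)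
      with hQdef
    have hbdd : BddAbove Q := by
      refine ⟨∑ t, (∑ i, ‖φ t i‖) ^ 2 * R, ?_⟩
      rintro y ⟨u, hu, rfl⟩
      refine Finset.sum_le_sum fun t _ => ?_
      have hut : ‖u t‖ ^ 2 ≤ R := by
        have h1 : (fun _ : Fin T => (1 : ℝ)) t * ‖u t‖ ^ 2 ≤
            ∑ s, (fun _ : Fin T => (1 : ℝ)) s * ‖u s‖ ^ 2 :=
          Finset.single_le_sum (f := fun s : Fin T => (1:ℝ) * ‖u s‖ ^ 2) (fun s _ => by positivity) (Finset.mem_univ t)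
        simpa using h1.trans hu.2
      have habs : |∑ i, sgn (σ t i) * (inner ℝ (u t) (φ t i) : ℝ)| ≤ ‖u t‖ * ∑ i, ‖φ t i‖ := by
        calc |∑ i, sgn (σ t i) * (inner ℝ (u t) (φ t i) : ℝ)|
            ≤ ∑ i, |sgn (σ t i) * (inner ℝ (u t) (φ t i) : ℝ)| := Finset.abs_sum_le_sum_abs _ _
          _ ≤ ∑ i, ‖u t‖ * ‖φ t i‖ := by
              refine Finset.sum_le_sum fun i _ => ?_
              rw [abs_mul]
              have hs : |sgn (σ t i)| = 1 := by unfold sgn; rcases σ t i <;> simp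
              rw [hs, one_mul]
              exact abs_real_inner_le_norm _ _
          _ = ‖u t‖ * ∑ i, ‖φ t i‖ := by rw [Finset.mul_sum]
      calc (∑ i, sgn (σ t i) * (inner ℝ (u t) (φ t i) : ℝ)) ^ 2
          = |∑ i, sgn (σ t i) * (inner ℝ (u t) (φ t i) : ℝ)| ^ 2 := (sq_abs _).symm
        _ ≤ (‖u t‖ * ∑ i, ‖φ t i‖) ^ 2 := by
            apply pow_le_pow_left₀ (abs_nonneg _) habs
        _ = (∑ i, ‖φ t i‖) ^ 2 * ‖u t‖ ^ 2 := by ring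
        _ ≤ (∑ i, ‖φ t i‖) ^ 2 * R := by
            apply mul_le_mul_of_nonneg_left hut (by positivity)
    refine Real.sSup_le ?_ (mul_nonneg (Real.sqrt_nonneg _) (Real.sqrt_nonneg _))
    rintro x ⟨w, hw, rfl⟩
    set a : Fin T → ℝ := fun t => ∑ i, sgn (σ t i) * (inner ℝ (w t) (φ t i) : ℝ) with ha
    set v : Fin T → H := fun t => Real.sqrt (lam t) • w t with hv
    have hvC : v ∈ C := hC w hw.1 _ fun t => Real.sqrt_pos.2 (hlam t)
    have hv1 : v ∈ hypClass C R (fun _ => 1) := by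
      refine ⟨hvC, ?_⟩
      have : ∀ t, (1 : ℝ) * ‖v t‖ ^ 2 = lam t * ‖w t‖ ^ 2 := by
        intro t
        rw [one_mul, hv]
        simp only [norm_smul, mul_pow, Real.norm_eq_abs,
          abs_of_nonneg (Real.sqrt_nonneg _), Real.sq_sqrt (hlam t).le]
      rw [Finset.sum_congr rfl fun t _ => this t]
      exact hw.2
    have hav : ∀ t, ∑ i, sgn (σ t i) * (inner ℝ (v t) (φ t i) : ℝ) = Real.sqrt (lam t) * a t := by
      intro t
      rw [ha, Finset.mul_sum]
      refine Finset.sum_congr rfl fun i _ => ?_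
      rw [hv]; simp only [real_inner_smul_left]; ring
    have hmem : (∑ t, (Real.sqrt (lam t) * a t) ^ 2) ∈ Q := by
      refine ⟨v, hv1, ?_⟩
      exact Finset.sum_congr rfl fun t _ => by rw [hav]
    have hsum : ∑ t, lam t * a t ^ 2 ≤ sSup Q := by
      have heq : ∑ t, lam t * a t ^ 2 = ∑ t, (Real.sqrt (lam t) * a t) ^ 2 := by
        refine Finset.sum_congr rfl fun t _ => ?_
        rw [mul_pow, Real.sq_sqrt (hlam t).le]
      rw [heq]
      exact le_csSup hbdd hmem
    have hcs : (∑ t, a t) ^ 2 ≤ L * ∑ t, lam t * a t ^ 2 := by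
      have h := Finset.sum_mul_sq_le_sq_mul_sq Finset.univ
        (fun t => (Real.sqrt (lam t))⁻¹) (fun t => Real.sqrt (lam t) * a t)
      have h1 : ∀ t : Fin T, (Real.sqrt (lam t))⁻¹ * (Real.sqrt (lam t) * a t) = a t := by
        intro t
        rw [← mul_assoc, inv_mul_cancel₀ (Real.sqrt_ne_zero'.2 (hlam t)), one_mul]
      have h2 : ∀ t : Fin T, ((Real.sqrt (lam t))⁻¹) ^ 2 = 1 / lam t := by
        intro t
        rw [inv_pow, Real.sq_sqrt (hlam t).le, one_div]
      have h3 : ∀ t : Fin T, (Real.sqrt (lam t) * a t) ^ 2 = lam t * a t ^ 2 := by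
        intro t; rw [mul_pow, Real.sq_sqrt (hlam t).le]
      rw [Finset.sum_congr rfl fun t _ => h1 t, Finset.sum_congr rfl fun t _ => h2 t,
        Finset.sum_congr rfl fun t _ => h3 t] at h
      exact h
    have hQ0 : 0 ≤ ∑ t, lam t * a t ^ 2 := Finset.sum_nonneg fun t _ => mul_nonneg (hlam t).le (sq_nonneg _)
    calc ∑ t, a t ≤ |∑ t, a t| := le_abs_self _
      _ = Real.sqrt ((∑ t, a t) ^ 2) := (Real.sqrt_sq_eq_abs _).symm
      _ ≤ Real.sqrt (L * ∑ t, lam t * a t ^ 2) := Real.sqrt_le_sqrt hcs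
      _ = Real.sqrt L * Real.sqrt (∑ t, lam t * a t ^ 2) := Real.sqrt_mul hL0 _
      _ ≤ Real.sqrt L * Real.sqrt (sSup Q) :=
          mul_le_mul_of_nonneg_left (Real.sqrt_le_sqrt hsum) (Real.sqrt_nonneg _)
  -- assemble
  have hsum : (∑ σ : Fin T → Fin N → Bool,
      sSup ((fun w : Fin T → H =>
        ∑ t, ∑ i, sgn (σ t i) * (inner ℝ (w t) (φ t i) : ℝ)) '' hypClass C R lam)) ≤
      Real.sqrt L * ∑ σ : Fin T → Fin N → Bool,
        Real.sqrt (sSup ((fun w : Fin T → H =>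
          ∑ t, (∑ i, sgn (σ t i) * (inner ℝ (w t) (φ t i) : ℝ)) ^ 2) ''
            hypClass C R (fun _ => 1))) := by
    rw [Finset.mul_sum]
    exact Finset.sum_le_sum fun σ _ => key σ
  unfold radComplexity
  have hc1 : (0 : ℝ) ≤ 2 / (T * N) := by positivity
  have hc2 : (0 : ℝ) ≤ 1 / 2 ^ (T * N) := by positivity
  calc (2 / (↑T * ↑N)) * ((1 / 2 ^ (T * N)) * ∑ σ : Fin T → Fin N → Bool,
        sSup ((fun w : Fin T → H =>
          ∑ t, ∑ i, sgn (σ t i) * (inner ℝ (w t) (φ t i) : ℝ)) '' hypClass C R lam))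
      ≤ (2 / (↑T * ↑N)) * ((1 / 2 ^ (T * N)) * (Real.sqrt L *
          ∑ σ : Fin T → Fin N → Bool,
            Real.sqrt (sSup ((fun w : Fin T → H =>
              ∑ t, (∑ i, sgn (σ t i) * (inner ℝ (w t) (φ t i) : ℝ)) ^ 2) ''
                hypClass C R (fun _ => 1))))) := by
        apply mul_le_mul_of_nonneg_left _ hc1
        exact mul_le_mul_of_nonneg_left hsum hc2
    _ = (2 / (↑T * ↑N)) * Real.sqrt L * ((1 / 2 ^ (T * N)) *
          ∑ σ : Fin T → Fin N → Bool,
            Real.sqrt (sSup ((fun w : Fin T → H =>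
              ∑ t, (∑ i, sgn (σ t i) * (inner ℝ (w t) (φ t i) : ℝ)) ^ 2) ''
                hypClass C R (fun _ => 1)))) := by ring
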